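/- Let {K_n} be a Kangaroo recurrence with ℓ hops of length g. For every r ≥ 2, the number of index sets S ⊆ {1, …, r} with 1 ∈ S and r ∈ S such that Σ_{p∈S} K_p is a legal decomposition equals K_{r+1} − 2K_r + K_{r−1}. -/

import Mathlib

/-- The coefficients of a Kangaroo recurrence with `ℓ` hops of length `g`:
`c i = 1` for `i = 1, g+1, 2g+1, …, ℓg+1` and `c i = 0` otherwise. -/
def kanC (g ℓ : ℕ) (i : ℕ) : ℕ :=
  if 1 ≤ i ∧ i ≤ ℓ * g + 1 ∧ i % g = 1 % g then 1 else 0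

/-- Legality of a coefficient sequence `a_1, …, a_m` (encoded as a list) with respect to a
positive linear recurrence with coefficients `c_1, …, c_L`. -/
inductive IsLegal (L : ℕ) (c : ℕ → ℕ) : List ℕ → Prop
  | short (m : ℕ) (h : m < L) :
      IsLegal L c ((List.range m).map fun i => c (i + 1))
  | long (s t : ℕ) (a : ℕ) (rest : List ℕ)
      (hs1 : 1 ≤ s) (hsL : s ≤ L) (ha : a < c s)
      (hrest : IsLegal L c rest) :
      IsLegal L c
        (((List.range (s - 1)).map fun i => c (i + 1)) ++ a :: (List.replicate t 0 ++ rest))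

/-- The indicator list `a_1, …, a_m` of a set `S` of indices, where `a_j = 1` iff
`m + 1 - j ∈ S` (so the list entry `a_1` corresponds to the largest index `m`). -/
def indList (m : ℕ) (S : Finset ℕ) : List ℕ :=
  (List.range m).map fun j => if m - j ∈ S then 1 else 0

/-- A finite set `S` of indices is legal if all its elements are `≥ 1` and, when `S` is
nonempty, the indicator coefficient list (of length the maximum of `S`) is legal. -/
def IsLegalSet (L : ℕ) (c : ℕ → ℕ) (S : Finset ℕ) : Prop :=
  (∀ i ∈ S, 1 ≤ i) ∧ (S.Nonempty → IsLegal L c (indList (S.sup id) S))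

/-!
Identify an index set `S ⊆ {1, …, m}` with its 0/1 coefficient list of length `m`, read from
the largest index down. A legal list is either the prefix `c_1, …, c_m` (when `m < L`) or a block
`c_1, …, c_{s-1}, 0` with `c_s = 1` followed by a legal list; this is the recurrence of `K`, so
there are exactly `K_{m+1}` legal lists of length `m`. Legality is preserved and reflected by a
leading and by a trailing zero, so the legal lists of length `r` that end in `1` number
`K_{r+1} - K_r`, and those that moreover start with `1` number `(K_{r+1} - K_r) - (K_r - K_{r-1})`.
-/

open Finset

variable {L : ℕ} {c : ℕ → ℕ}

def coeffPrefix (c : ℕ → ℕ) (m : ℕ) : List ℕ := (List.range m).map fun i => c (i + 1)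

@[simp] lemma length_coeffPrefix (c : ℕ → ℕ) (m : ℕ) : (coeffPrefix c m).length = m := by
  simp [coeffPrefix]

lemma coeffPrefix_succ (c : ℕ → ℕ) (m : ℕ) :
    coeffPrefix c (m + 1) = coeffPrefix c m ++ [c (m + 1)] := by
  simp [coeffPrefix, List.range_succ]

lemma getElem?_coeffPrefix_append {n i : ℕ} (l : List ℕ) (h : i < n) :
    (coeffPrefix c n ++ l)[i]? = some (c (i + 1)) := by
  rw [List.getElem?_append_left (by simpa using h)]
  simp [coeffPrefix, h]

lemma getElem?_coeffPrefix_append_zero_cons (n : ℕ) (l : List ℕ) :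
    (coeffPrefix c n ++ 0 :: l)[n]? = some 0 := by
  rw [List.getElem?_append_right (by simp)]
  simp

namespace IsLegal

lemma nil (hL : 0 < L) : IsLegal L c [] := short 0 hL

lemma block {s : ℕ} (hs : 1 ≤ s) (hsL : s ≤ L) (hcs : 0 < c s) {l : List ℕ}
    (h : IsLegal L c l) : IsLegal L c (coeffPrefix c (s - 1) ++ 0 :: l) :=
  long s 0 0 l hs hsL hcs h

lemma zero_cons (hc1 : 0 < c 1) (hL : 0 < L) {l : List ℕ} (h : IsLegal L c l) :
    IsLegal L c (0 :: l) :=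
  block le_rfl hL hc1 h

lemma replicate_zero_append (hc1 : 0 < c 1) (hL : 0 < L) {l : List ℕ} (h : IsLegal L c l)
    (t : ℕ) : IsLegal L c (List.replicate t 0 ++ l) := by
  induction t with
  | zero => exact h
  | succ t ih => exact ih.zero_cons hc1 hL

lemma le_one (hc : ∀ i, c i ≤ 1) {l : List ℕ} (h : IsLegal L c l) : ∀ x ∈ l, x ≤ 1 := by
  induction h with
  | short m _ => simp [hc]
  | long s t a rest _ _ ha _ ih =>
    have := hc s
    simp only [List.mem_append, List.mem_map, List.mem_cons, List.mem_replicate]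
    rintro x (⟨i, -, rfl⟩ | rfl | ⟨-, rfl⟩ | hx) <;> first | exact hc _ | omega | exact ih x hx

lemma of_zero_cons (hc1 : 0 < c 1) {l : List ℕ} (h : IsLegal L c (0 :: l)) : IsLegal L c l := by
  generalize hl : 0 :: l = l' at h
  cases h with
  | short m hm =>
    cases m with
    | zero => simp at hl
    | succ m =>
      have := congrArg (·[0]?) hl
      simp [List.range_succ_eq_map] at this
      omega
  | long s t a rest hs hsL ha hrest =>
    obtain rfl | hs2 := eq_or_lt_of_le hs
    · simp only [Nat.sub_self, List.range_zero, List.map_nil, List.nil_append,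
        List.cons.injEq] at hl
      obtain ⟨rfl, rfl⟩ := hl
      exact hrest.replicate_zero_append hc1 (by omega) t
    · have := congrArg (·[0]?) hl
      rw [← coeffPrefix] at this
      simp only [getElem?_coeffPrefix_append _ (show 0 < s - 1 by omega)] at this
      simp at this
      omega

lemma append_zero (hcL : 0 < c L) (hL : 0 < L) {l : List ℕ} (h : IsLegal L c l) :
    IsLegal L c (l ++ [0]) := by
  induction h with
  | short m hm =>
    change IsLegal L c (coeffPrefix c m ++ [0])
    by_cases hcm : c (m + 1) = 0
    · have hmL : m + 1 ≠ L := fun h => by rw [h] at hcm; omega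
      have := short (L := L) (c := c) (m + 1) (by omega)
      rwa [← coeffPrefix, coeffPrefix_succ, hcm] at this
    · exact block (s := m + 1) (by omega) hm (by omega) (nil hL)
  | long s t a rest hs hsL ha _ ih => simpa using long s t a (rest ++ [0]) hs hsL ha ih

lemma of_append_zero {l : List ℕ} (h : IsLegal L c (l ++ [0])) : IsLegal L c l := by
  generalize hl : l ++ [0] = l' at h
  induction h generalizing l with
  | short m hm =>
    cases m with
    | zero => simp at hl
    | succ m =>
      rw [← coeffPrefix, coeffPrefix_succ, List.append_singleton_inj] at hl
      rw [hl.1]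
      exact short m (by omega)
  | long s t a rest hs hsL ha hrest ih =>
    rcases List.eq_nil_or_concat rest with rfl | ⟨rest, x, rfl⟩
    · cases t with
      | zero =>
        change l ++ [0] = coeffPrefix c (s - 1) ++ [a] at hl
        rw [List.append_singleton_inj] at hl
        rw [hl.1]
        exact short (s - 1) (by omega)
      | succ t =>
        change l ++ [0] = coeffPrefix c (s - 1) ++ a :: (List.replicate (t + 1) 0 ++ []) at hl
        rw [List.replicate_succ', List.append_nil, ← List.cons_append, ← List.append_assoc,
          List.append_singleton_inj] at hl
        rw [hl.1]
        simpa [coeffPrefix] using long s t a [] hs hsL ha hrest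
    · change l ++ [0] = coeffPrefix c (s - 1) ++ a :: (List.replicate t 0 ++ rest.concat x) at hl
      rw [List.concat_eq_append, ← List.append_assoc, ← List.cons_append, ← List.append_assoc,
        List.append_singleton_inj] at hl
      rw [hl.1]
      exact long s t a rest hs hsL ha (ih (by rw [hl.2, List.concat_eq_append]))

end IsLegal

lemma isLegal_iff (hc : ∀ i, c i ≤ 1) (hc1 : 0 < c 1) {l : List ℕ} :
    IsLegal L c l ↔ (∃ m < L, l = coeffPrefix c m) ∨ ∃ s, 1 ≤ s ∧ s ≤ L ∧ c s = 1 ∧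
      ∃ l', IsLegal L c l' ∧ l = coeffPrefix c (s - 1) ++ 0 :: l' := by
  constructor
  · rintro (⟨m, hm⟩ | ⟨s, t, a, rest, hs, hsL, ha, hrest⟩)
    · exact .inl ⟨m, hm, rfl⟩
    · have := hc s
      obtain rfl : a = 0 := by omega
      exact .inr ⟨s, hs, hsL, by omega, _, hrest.replicate_zero_append hc1 (by omega) t, rfl⟩
  · rintro (⟨m, hm, rfl⟩ | ⟨s, hs, hsL, hcs, l', hl', rfl⟩)
    · exact .short m hm
    · exact hl'.block hs hsL (by omega)

lemma coeffPrefix_ne_append_zero_cons {m s : ℕ} (hs : 1 ≤ s) (hsm : s ≤ m) (hcs : c s ≠ 0)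
    (l : List ℕ) : coeffPrefix c m ≠ coeffPrefix c (s - 1) ++ 0 :: l := by
  intro h
  have := congrArg (·[s - 1]?) h
  simp only [getElem?_coeffPrefix_append_zero_cons] at this
  rw [← List.append_nil (coeffPrefix c m), getElem?_coeffPrefix_append _ (by omega),
    Nat.sub_add_cancel hs, Option.some_inj] at this
  exact hcs this

lemma eq_of_coeffPrefix_append_zero_cons_eq {s s' : ℕ} (hs : 1 ≤ s) (hs' : 1 ≤ s') (hcs : c s ≠ 0)
    (hcs' : c s' ≠ 0) {l l' : List ℕ}
    (h : coeffPrefix c (s - 1) ++ 0 :: l = coeffPrefix c (s' - 1) ++ 0 :: l') : s = s' := by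
  by_contra hne
  wlog hlt : s < s' generalizing s s' l l'
  · exact this hs' hs hcs' hcs h.symm (Ne.symm hne) (by omega)
  have := congrArg (·[s - 1]?) h
  simp only [getElem?_coeffPrefix_append_zero_cons] at this
  rw [getElem?_coeffPrefix_append _ (by omega), Nat.sub_add_cancel hs, Option.some_inj] at this
  exact hcs this.symm

lemma indList_succ (m : ℕ) (S : Finset ℕ) :
    indList (m + 1) S = (if m + 1 ∈ S then 1 else 0) :: indList m S := by
  simp [indList, List.range_succ_eq_map]

lemma indList_insert_of_lt {m i : ℕ} (h : m < i) (S : Finset ℕ) :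
    indList m (insert i S) = indList m S := by
  refine List.map_congr_left fun j hj => ?_
  simp only [Finset.mem_insert]
  rw [List.mem_range] at hj
  simp only [show m - j ≠ i by omega, false_or]

lemma exists_indList_eq {l : List ℕ} (hl : ∀ x ∈ l, x ≤ 1) :
    ∃ S ⊆ Icc 1 l.length, indList l.length S = l := by
  induction l with
  | nil => exact ⟨∅, by simp, rfl⟩
  | cons x l ih =>
    obtain ⟨S, hS, hSl⟩ := ih fun y hy => hl y (List.mem_cons_of_mem x hy)
    have hSsucc : S ⊆ Icc 1 (l.length + 1) := hS.trans (Icc_subset_Icc_right (by omega))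
    have hx := hl x List.mem_cons_self
    interval_cases x
    · refine ⟨S, hSsucc, ?_⟩
      rw [List.length_cons, indList_succ, hSl, if_neg fun h => by simpa using hS h]
    · refine ⟨insert (l.length + 1) S, insert_subset (by simp) hSsucc, ?_⟩
      rw [List.length_cons, indList_succ, indList_insert_of_lt (by omega), hSl, if_pos (by simp)]

lemma getElem?_indList {m j : ℕ} (h : j < m) (S : Finset ℕ) :
    (indList m S)[j]? = some (if m - j ∈ S then 1 else 0) := by
  simp [indList, h]

lemma indList_injOn (m : ℕ) : Set.InjOn (indList m) {S | S ⊆ Icc 1 m} := by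
  intro S hS T hT h
  ext i
  by_cases hi : i ∈ Icc 1 m
  · rw [mem_Icc] at hi
    have := congrArg (·[m - i]?) h
    simp only [getElem?_indList (show m - i < m by omega), Nat.sub_sub_self hi.2] at this
    split_ifs at this <;> simp_all
  · exact iff_of_false (fun h => hi (hS h)) (fun h => hi (hT h))

-- The image of `indList m` serves as the finite universe of 0/1 lists of length `m`.
open Classical in
noncomputable def legalLists (L : ℕ) (c : ℕ → ℕ) (m : ℕ) : Finset (List ℕ) :=
  ((Icc 1 m).powerset.image (indList m)).filter (IsLegal L c)

lemma mem_legalLists (hc : ∀ i, c i ≤ 1) {m : ℕ} {l : List ℕ} :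
    l ∈ legalLists L c m ↔ IsLegal L c l ∧ l.length = m := by
  simp only [legalLists, mem_filter, mem_image, mem_powerset]
  constructor
  · rintro ⟨⟨S, -, rfl⟩, hl⟩
    exact ⟨hl, by simp [indList]⟩
  · rintro ⟨hl, rfl⟩
    exact ⟨exists_indList_eq (hl.le_one hc), hl⟩

lemma legalLists_eq (hc : ∀ i, c i ≤ 1) (hc1 : 0 < c 1) (m : ℕ) :
    legalLists L c m = (if m < L then {coeffPrefix c m} else ∅) ∪
      ((Icc 1 (min m L)).filter (c · = 1)).biUnion fun s =>
        (legalLists L c (m - s)).image (coeffPrefix c (s - 1) ++ 0 :: ·) := by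
  ext l
  simp only [mem_union, mem_biUnion, mem_filter, mem_Icc, mem_image, mem_legalLists hc]
  rw [isLegal_iff hc hc1]
  constructor
  · rintro ⟨⟨m', hm', rfl⟩ | ⟨s, hs, hsL, hcs, l', hl', rfl⟩, rfl⟩
    · simp [hm']
    · simp only [List.length_append, length_coeffPrefix, List.length_cons] at *
      exact .inr ⟨s, ⟨⟨hs, by omega⟩, hcs⟩, l', ⟨hl', by omega⟩, rfl⟩
  · rintro (hl | ⟨s, ⟨⟨hs, hsm⟩, hcs⟩, l', ⟨hl', hlen⟩, rfl⟩)
    · split_ifs at hl with hm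
      · rw [mem_singleton] at hl
        subst hl
        exact ⟨.inl ⟨m, hm, rfl⟩, length_coeffPrefix c m⟩
      · simp at hl
    · refine ⟨.inr ⟨s, hs, by omega, hcs, l', hl', rfl⟩, ?_⟩
      simp only [List.length_append, length_coeffPrefix, List.length_cons, hlen]
      omega

lemma card_legalLists (hc : ∀ i, c i ≤ 1) (hc1 : 0 < c 1) (m : ℕ) :
    #(legalLists L c m) = (if m < L then 1 else 0) +
      ∑ s ∈ Icc 1 (min m L), c s * #(legalLists L c (m - s)) := by
  have hshort_disj : Disjoint (if m < L then {coeffPrefix c m} else ∅)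
      (((Icc 1 (min m L)).filter (c · = 1)).biUnion fun s =>
        (legalLists L c (m - s)).image (coeffPrefix c (s - 1) ++ 0 :: ·)) := by
    split_ifs
    · simp only [disjoint_singleton_left, mem_biUnion, mem_filter, mem_Icc, mem_image, not_exists,
        not_and]
      intro s ⟨⟨hs, hsm⟩, hcs⟩ l' _ h
      exact coeffPrefix_ne_append_zero_cons hs (by omega) (by omega) l' h.symm
    · exact disjoint_empty_left _
  have hblocks_disj : ((Icc 1 (min m L)).filter (c · = 1) : Set ℕ).PairwiseDisjoint fun s =>
      (legalLists L c (m - s)).image (coeffPrefix c (s - 1) ++ 0 :: ·) := by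
    intro s hs s' hs' hne
    simp only [coe_filter, mem_Icc, Set.mem_ofPred_eq] at hs hs'
    simp only [Function.onFun, disjoint_left, mem_image, not_exists, not_and]
    rintro _ ⟨l, -, rfl⟩ l' - h
    exact hne (eq_of_coeffPrefix_append_zero_cons_eq hs.1.1 hs'.1.1 (by omega) (by omega) h.symm)
  rw [legalLists_eq hc hc1, card_union_of_disjoint hshort_disj, card_biUnion hblocks_disj,
    sum_filter]
  congr 1
  · split_ifs <;> rfl
  · refine sum_congr rfl fun s _ => ?_
    rw [card_image_of_injective _ fun l l' h => by simpa using h]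
    rcases Nat.le_one_iff_eq_zero_or_eq_one.mp (hc s) with h | h <;> simp [h]

lemma eq_of_kangaroo_recurrence {u K : ℕ → ℕ}
    (hL : 0 < L) (hu : ∀ m, u m = (if m < L then 1 else 0) + ∑ s ∈ Icc 1 (min m L), c s * u (m - s))
    (hK1 : K 1 = 1)
    (hKsmall : ∀ n, 1 ≤ n → n < L → K (n + 1) = (∑ p ∈ Icc 1 n, c p * K (n + 1 - p)) + 1)
    (hKrec : ∀ n, L ≤ n → K (n + 1) = ∑ p ∈ Icc 1 L, c p * K (n + 1 - p)) (m : ℕ) :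
    u m = K (m + 1) := by
  induction m using Nat.strong_induction_on with
  | _ m ih =>
  have hsum : ∀ k ≤ m, ∑ s ∈ Icc 1 k, c s * u (m - s) = ∑ p ∈ Icc 1 k, c p * K (m + 1 - p) :=
    fun k hk => sum_congr rfl fun s hs => by
      rw [mem_Icc] at hs
      rw [ih (m - s) (by omega), Nat.sub_add_comm (by omega)]
  rw [hu m]
  rcases Nat.eq_zero_or_pos m with rfl | hm
  · simp [hK1, hL]
  · rcases lt_or_ge m L with hmL | hmL
    · rw [if_pos hmL, min_eq_left hmL.le, hsum m le_rfl, hKsmall m hm hmL, add_comm]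
    · rw [if_neg (by omega), min_eq_right hmL, hsum L hmL, hKrec m hmL, zero_add]

lemma filter_getLast?_ne_one_legalLists (hc : ∀ i, c i ≤ 1) (hcL : 0 < c L) (hL : 0 < L)
    (m : ℕ) : (legalLists L c (m + 1)).filter (fun l => ¬ l.getLast? = some 1) =
      (legalLists L c m).image (· ++ [0]) := by
  ext l
  simp only [mem_filter, mem_image, mem_legalLists hc]
  constructor
  · rintro ⟨⟨hl, hlen⟩, hlast⟩
    rcases List.eq_nil_or_concat' l with rfl | ⟨l', x, rfl⟩
    · simp at hlen
    · have hx := hl.le_one hc x (by simp)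
      rw [List.getLast?_concat, Option.some_inj] at hlast
      obtain rfl : x = 0 := by omega
      exact ⟨l', ⟨hl.of_append_zero, by simpa using hlen⟩, rfl⟩
  · rintro ⟨l', ⟨hl', rfl⟩, rfl⟩
    exact ⟨⟨hl'.append_zero hcL hL, by simp⟩, by simp⟩

lemma filter_head?_ne_one_legalLists (hc : ∀ i, c i ≤ 1) (hc1 : 0 < c 1) (hL : 0 < L)
    (m : ℕ) :
    ((legalLists L c (m + 1)).filter (·.getLast? = some 1)).filter (fun l => ¬ l.head? = some 1) =
      ((legalLists L c m).filter (·.getLast? = some 1)).image (0 :: ·) := by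
  have getLast?_zero_cons (l : List ℕ) : (0 :: l).getLast? = some 1 ↔ l.getLast? = some 1 := by
    cases l <;> simp
  ext l
  simp only [mem_filter, mem_image, mem_legalLists hc]
  constructor
  · rintro ⟨⟨⟨hl, hlen⟩, hlast⟩, hhead⟩
    obtain _ | ⟨x, l'⟩ := l
    · simp at hlen
    · have hx := hl.le_one hc x (by simp)
      rw [List.head?_cons, Option.some_inj] at hhead
      obtain rfl : x = 0 := by omega
      exact ⟨l', ⟨⟨hl.of_zero_cons hc1, by simpa using hlen⟩, (getLast?_zero_cons l').1 hlast⟩, rfl⟩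
  · rintro ⟨l', ⟨⟨hl', rfl⟩, hlast⟩, rfl⟩
    exact ⟨⟨⟨hl'.zero_cons hc1 hL, by simp⟩, (getLast?_zero_cons l').2 hlast⟩, by simp⟩

lemma card_filter_getLast?_eq_one_legalLists (hc : ∀ i, c i ≤ 1) (hcL : 0 < c L) (hL : 0 < L)
    (m : ℕ) : #((legalLists L c (m + 1)).filter (·.getLast? = some 1)) + #(legalLists L c m) =
      #(legalLists L c (m + 1)) := by
  rw [← card_filter_add_card_filter_not (s := legalLists L c (m + 1)) (·.getLast? = some 1),
    filter_getLast?_ne_one_legalLists hc hcL hL,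
    card_image_of_injective _ fun l l' h => List.append_cancel_right h]

lemma card_filter_head?_eq_one_legalLists (hc : ∀ i, c i ≤ 1) (hc1 : 0 < c 1) (hL : 0 < L)
    (m : ℕ) :
    #(((legalLists L c (m + 1)).filter (·.getLast? = some 1)).filter (·.head? = some 1)) +
      #((legalLists L c m).filter (·.getLast? = some 1)) =
      #((legalLists L c (m + 1)).filter (·.getLast? = some 1)) := by
  rw [← card_filter_add_card_filter_not
      (s := (legalLists L c (m + 1)).filter (·.getLast? = some 1)) (·.head? = some 1),
    filter_head?_ne_one_legalLists hc hc1 hL,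
    card_image_of_injective _ List.cons_injective]

lemma head?_indList_succ (m : ℕ) (S : Finset ℕ) :
    (indList (m + 1) S).head? = some (if m + 1 ∈ S then 1 else 0) := by
  rw [indList_succ, List.head?_cons]

lemma getLast?_indList_succ (m : ℕ) (S : Finset ℕ) :
    (indList (m + 1) S).getLast? = some (if 1 ∈ S then 1 else 0) := by
  rw [List.getLast?_eq_getElem?, indList, List.length_map, List.length_range, Nat.add_sub_cancel,
    ← indList, getElem?_indList (Nat.lt_add_one m), Nat.add_sub_cancel_left]

lemma isLegalSet_iff_isLegal_indList {r : ℕ} {S : Finset ℕ} (hS : S ⊆ Icc 1 r) (hr : r ∈ S) :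
    IsLegalSet L c S ↔ IsLegal L c (indList r S) := by
  have hsup : S.sup id = r := le_antisymm (Finset.sup_le fun i hi => (mem_Icc.mp (hS hi)).2)
    (le_sup (f := id) hr)
  simp only [IsLegalSet, hsup]
  exact ⟨fun h => h.2 ⟨r, hr⟩, fun h => ⟨fun i hi => (mem_Icc.mp (hS hi)).1, fun _ => h⟩⟩

lemma ncard_isLegalSet_eq_card_legalLists (m : ℕ) :
    {S : Finset ℕ | S ⊆ Icc 1 (m + 1) ∧ 1 ∈ S ∧ m + 1 ∈ S ∧ IsLegalSet L c S}.ncard =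
      #(((legalLists L c (m + 1)).filter (·.getLast? = some 1)).filter (·.head? = some 1)) := by
  classical
  have hsets : {S : Finset ℕ | S ⊆ Icc 1 (m + 1) ∧ 1 ∈ S ∧ m + 1 ∈ S ∧ IsLegalSet L c S} =
      ((Icc 1 (m + 1)).powerset.filter fun S =>
        IsLegal L c (indList (m + 1) S) ∧ 1 ∈ S ∧ m + 1 ∈ S : Finset (Finset ℕ)) := by
    ext S
    simp only [Set.mem_ofPred_eq, coe_filter, mem_powerset]
    constructor
    · rintro ⟨hS, h1, hr, hlegal⟩
      exact ⟨hS, (isLegalSet_iff_isLegal_indList hS hr).1 hlegal, h1, hr⟩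
    · rintro ⟨hS, hlegal, h1, hr⟩
      exact ⟨hS, h1, hr, (isLegalSet_iff_isLegal_indList hS hr).2 hlegal⟩
  rw [hsets, Set.ncard_coe_finset, legalLists, filter_filter, filter_filter, filter_image,
    card_image_of_injOn <|
      (indList_injOn (m + 1)).mono fun S hS => by simpa using (mem_filter.1 hS).1]
  congr 1
  refine filter_congr fun S _ => ?_
  simp only [head?_indList_succ, getLast?_indList_succ, Option.some_inj]
  split_ifs <;> simp_all

theorem card_legalLists_both_ends (hc : ∀ i, c i ≤ 1) (hc1 : 0 < c 1) (hcL : 0 < c L)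
    (hL : 0 < L) {K : ℕ → ℕ} (hK1 : K 1 = 1)
    (hKsmall : ∀ n, 1 ≤ n → n < L → K (n + 1) = (∑ p ∈ Icc 1 n, c p * K (n + 1 - p)) + 1)
    (hKrec : ∀ n, L ≤ n → K (n + 1) = ∑ p ∈ Icc 1 L, c p * K (n + 1 - p)) (m : ℕ) :
    (#(((legalLists L c (m + 2)).filter (·.getLast? = some 1)).filter (·.head? = some 1)) : ℤ) =
      K (m + 3) - 2 * K (m + 2) + K (m + 1) := by
  have hcount : ∀ n, #(legalLists L c n) = K (n + 1) :=
    eq_of_kangaroo_recurrence hL (card_legalLists hc hc1) hK1 hKsmall hKrec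
  have hends := card_filter_head?_eq_one_legalLists hc hc1 hL (m + 1)
  have hlast₁ := card_filter_getLast?_eq_one_legalLists hc hcL hL (m + 1)
  have hlast₀ := card_filter_getLast?_eq_one_legalLists hc hcL hL m
  simp only [hcount, Nat.add_assoc, Nat.reduceAdd] at hends hlast₁ hlast₀
  omega

lemma kanC_le_one (g ℓ i : ℕ) : kanC g ℓ i ≤ 1 := by
  unfold kanC
  split_ifs <;> omega

lemma kanC_one_pos (g ℓ : ℕ) : 0 < kanC g ℓ 1 := by
  simp [kanC]

lemma kanC_last_pos (g ℓ : ℕ) : 0 < kanC g ℓ (ℓ * g + 1) := by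
  simp [kanC, Nat.mul_comm ℓ g]

theorem kangaroo_count_both_ends_general (g ℓ : ℕ)
    (K : ℕ → ℕ) (hK1 : K 1 = 1)
    (hKsmall : ∀ n, 1 ≤ n → n < ℓ * g + 1 →
      K (n + 1) = (∑ p ∈ Finset.Icc 1 n, kanC g ℓ p * K (n + 1 - p)) + 1)
    (hKrec : ∀ n, ℓ * g + 1 ≤ n →
      K (n + 1) = ∑ p ∈ Finset.Icc 1 (ℓ * g + 1), kanC g ℓ p * K (n + 1 - p))
    (r : ℕ) (hr : 2 ≤ r) :
    ({S : Finset ℕ | S ⊆ Finset.Icc 1 r ∧ 1 ∈ S ∧ r ∈ S ∧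
        IsLegalSet (ℓ * g + 1) (kanC g ℓ) S}.ncard : ℤ)
      = (K (r + 1) : ℤ) - 2 * K r + K (r - 1) := by
  obtain ⟨m, rfl⟩ : ∃ m, r = m + 2 := ⟨r - 2, by omega⟩
  rw [ncard_isLegalSet_eq_card_legalLists (m + 1),
    card_legalLists_both_ends (kanC_le_one g ℓ) (kanC_one_pos g ℓ) (kanC_last_pos g ℓ)
      (Nat.succ_pos _) hK1 hKsmall hKrec m]
  rfl

/-- For a Kangaroo recurrence `{K_n}` with `ℓ` hops of length `g`
and any `r ≥ 2`, the number of legal index sets `S ⊆ {1, …, r}` containing both `1`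
and `r` equals `K_{r+1} - 2K_r + K_{r-1}`. -/
theorem kangaroo_count_both_ends (g ℓ : ℕ) (hg : 1 ≤ g) (hℓ : 1 ≤ ℓ)
    (K : ℕ → ℕ) (hK1 : K 1 = 1)
    (hKsmall : ∀ n, 1 ≤ n → n < ℓ * g + 1 →
      K (n + 1) = (∑ p ∈ Finset.Icc 1 n, kanC g ℓ p * K (n + 1 - p)) + 1)
    (hKrec : ∀ n, ℓ * g + 1 ≤ n →
      K (n + 1) = ∑ p ∈ Finset.Icc 1 (ℓ * g + 1), kanC g ℓ p * K (n + 1 - p))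
    (r : ℕ) (hr : 2 ≤ r) :
    ({S : Finset ℕ | S ⊆ Finset.Icc 1 r ∧ 1 ∈ S ∧ r ∈ S ∧
        IsLegalSet (ℓ * g + 1) (kanC g ℓ) S}.ncard : ℤ)
      = (K (r + 1) : ℤ) - 2 * K r + K (r - 1) :=
  kangaroo_count_both_ends_general g ℓ K hK1 hKsmall hKrec r hr
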